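/- Let n ≥ 1, N = 2n + 1, and E > 0. On (ℂ²)^{⊗N} with standard basis {e_b : b ∈ {0,1}^N}, let H be the diagonal Hamiltonian with H e_b = E · wgt(b) · e_b, and let ρ be the diagonal density matrix with ρ e_b = 2^{−2n} e_b if b_N = 0 and ρ e_b = 0 if b_N = 1 (2n qubits at infinite temperature and one qubit at zero temperature). Then every unitary U attaining the minimum of tr(U ρ U† H) over all unitaries maps the span of {e_b : b_N = 0} onto the span of {e_w : wgt(w) ≤ n}; equivalently, for every basis vector e_w, the vector U† e_w lies in span{e_b : b_N = 0} if and only if wgt(w) ≤ n, so that the last bit of U^{−1} applied to a basis state computes the MAJORITY function. -/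

import Mathlib

/-!
Write `ρ = 2^{-2n} P_A`, where `A` is the set of words whose last bit is `0`. The energy of
`U ρ U†` is then `2^{-2n} E ∑_w wgt(w) m(w)`, where the row masses `m(w) = ∑_{b ∈ A} |U_{wb}|²`
lie in `[0, 1]` and add up to `|A| = 2^{2n}`. The set `W` of words of weight at most `n` has the
same size (complementing all bits exchanges `W` with its complement), so a permutation matrix
sending `A` onto `W` realises `m = 1_W`. Since `wgt < n + 1/2` exactly on `W`, the bathtub
principle makes `1_W` the unique minimiser of `∑ wgt · m` under these constraints, so an optimal
`U` has `m = 1_W`. By unitarity this forces `U_{wb} = 0` unless `w ∈ W ↔ b ∈ A`, i.e. `U` is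
block diagonal and maps `span {e_b : b ∈ A}` onto `span {e_w : w ∈ W}`.
-/

open Matrix Finset

namespace MajorityEngine

theorem cast_lt_add_half_of_le {k n : ℕ} (h : k ≤ n) : (k : ℝ) < n + 1 / 2 := by
  have : (k : ℝ) ≤ n := by exact_mod_cast h
  linarith

theorem add_half_lt_cast_of_lt {k n : ℕ} (h : n < k) : (n : ℝ) + 1 / 2 < k := by
  have : (n : ℝ) + 1 ≤ k := by exact_mod_cast h
  linarith

section General

variable {ι : Type*}

theorem two_mul_card_filter_of_involutive [Fintype ι] (p : ι → Prop) [DecidablePred p]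
    {f : ι → ι} (hf : Function.Involutive f) (hp : ∀ x, p (f x) ↔ ¬ p x) :
    2 * #{x | p x} = Fintype.card ι := by
  have hswap : #{x | ¬ p x} = #{x | p x} :=
    card_nbij' f f (fun x hx => by simp_all) (fun x hx => by have := hp (f x); simp_all)
      (fun x _ => hf x) (fun x _ => hf x)
  rw [← card_univ, ← card_filter_add_card_filter_not (s := univ) p, hswap, two_mul]

def rowMass (M : Matrix ι ι ℂ) (A : Finset ι) (i : ι) : ℝ :=
  ∑ j ∈ A, Complex.normSq (M i j)

theorem rowMass_nonneg (M : Matrix ι ι ℂ) (A : Finset ι) (i : ι) : 0 ≤ rowMass M A i :=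
  sum_nonneg fun _ _ => Complex.normSq_nonneg _

theorem normSq_le_rowMass (M : Matrix ι ι ℂ) {A : Finset ι} {i j : ι} (hj : j ∈ A) :
    Complex.normSq (M i j) ≤ rowMass M A i :=
  single_le_sum (fun k _ => Complex.normSq_nonneg (M i k)) hj

variable [DecidableEq ι]

theorem rowMass_permMatrix (σ : Equiv.Perm ι) (A : Finset ι) (i : ι) :
    rowMass (σ.permMatrix ℂ) A i = if σ i ∈ A then 1 else 0 := by
  simp [rowMass, PEquiv.toMatrix_apply, apply_ite Complex.normSq]

variable [Fintype ι]

theorem bathtub_rigidity (W : Finset ι) (h s : ι → ℝ) (θ : ℝ)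
    (hlow : ∀ i ∈ W, h i < θ) (hhigh : ∀ i ∉ W, θ < h i)
    (hs0 : ∀ i, 0 ≤ s i) (hs1 : ∀ i, s i ≤ 1) (hsum : ∑ i, s i = #W)
    (hle : ∑ i, h i * s i ≤ ∑ i ∈ W, h i) (i : ι) :
    s i = if i ∈ W then 1 else 0 := by
  set t : ι → ℝ := fun i => if i ∈ W then 1 else 0
  -- `s - t ≤ 0` on `W`, where `h < θ`, and `s - t ≥ 0` off `W`, where `h > θ`
  have hterm : ∀ i, 0 ≤ (h i - θ) * (s i - t i) := fun i => by
    by_cases hi : i ∈ W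
    · simp only [t, if_pos hi]; nlinarith [hlow i hi, hs1 i]
    · simp only [t, if_neg hi]; nlinarith [hhigh i hi, hs0 i]
  have hsum_le : ∑ i, (h i - θ) * (s i - t i) ≤ 0 := by
    have ht : ∑ i, h i * t i = ∑ i ∈ W, h i := by simp [t, mul_ite, sum_ite_mem]
    have ht' : ∑ i, t i = #W := by simp [t]
    have hexpand : ∑ i, (h i - θ) * (s i - t i) =
        (∑ i, h i * s i - ∑ i, h i * t i) - θ * (∑ i, s i - ∑ i, t i) := by
      simp only [mul_sum, ← sum_sub_distrib]
      exact sum_congr rfl fun i _ => by ring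
    rw [hexpand, ht, ht', hsum]
    linarith
  have hzero := (sum_eq_zero_iff_of_nonneg fun i _ => hterm i).mp
    (le_antisymm hsum_le (sum_nonneg fun i _ => hterm i)) i (mem_univ i)
  have hθ : h i - θ ≠ 0 := by
    by_cases hi : i ∈ W
    · linarith [hlow i hi]
    · linarith [hhigh i hi]
  exact sub_eq_zero.mp ((mul_eq_zero.mp hzero).resolve_left hθ)

theorem mul_diagonal_mul_star_apply_self (M : Matrix ι ι ℂ) (p : ι → ℝ) (i : ι) :
    (M * diagonal (fun j => (p j : ℂ)) * star M) i i = ∑ j, p j * Complex.normSq (M i j) := by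
  rw [mul_apply]
  push_cast
  refine sum_congr rfl fun j _ => ?_
  rw [mul_diagonal, star_apply, Complex.star_def, ← Complex.mul_conj]
  ring

theorem re_trace_mul_diagonal_mul_star_mul_diagonal (M : Matrix ι ι ℂ) (p h : ι → ℝ) :
    (M * diagonal (fun j => (p j : ℂ)) * star M * diagonal (fun i => (h i : ℂ))).trace.re =
      ∑ i, h i * ∑ j, p j * Complex.normSq (M i j) := by
  simp only [trace, diag_apply, mul_diagonal, mul_diagonal_mul_star_apply_self, Complex.re_sum]
  simp [mul_comm]

theorem sum_normSq_row {U : Matrix ι ι ℂ} (hU : U ∈ unitaryGroup ι ℂ) (i : ι) :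
    ∑ j, Complex.normSq (U i j) = 1 := by
  have := congrArg Complex.re (congrFun₂ (mem_unitaryGroup_iff.mp hU) i i)
  simpa [mul_apply, Complex.mul_conj] using this

theorem sum_normSq_col {U : Matrix ι ι ℂ} (hU : U ∈ unitaryGroup ι ℂ) (j : ι) :
    ∑ i, Complex.normSq (U i j) = 1 := by
  have := congrArg Complex.re (congrFun₂ (mem_unitaryGroup_iff'.mp hU) j j)
  simpa [mul_apply, Complex.mul_conj, mul_comm] using this

theorem rowMass_add_rowMass_compl {U : Matrix ι ι ℂ} (hU : U ∈ unitaryGroup ι ℂ) (A : Finset ι)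
    (i : ι) : rowMass U A i + rowMass U Aᶜ i = 1 :=
  (sum_add_sum_compl A _).trans (sum_normSq_row hU i)

theorem rowMass_le_one {U : Matrix ι ι ℂ} (hU : U ∈ unitaryGroup ι ℂ) (A : Finset ι) (i : ι) :
    rowMass U A i ≤ 1 := by
  linarith [rowMass_add_rowMass_compl hU A i, rowMass_nonneg U Aᶜ i]

theorem sum_rowMass {U : Matrix ι ι ℂ} (hU : U ∈ unitaryGroup ι ℂ) (A : Finset ι) :
    ∑ i, rowMass U A i = #A := by
  simp [rowMass, sum_comm (s := univ), sum_normSq_col hU]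

theorem permMatrix_mem_unitaryGroup (σ : Equiv.Perm ι) :
    σ.permMatrix ℂ ∈ unitaryGroup ι ℂ := by
  rw [mem_unitaryGroup_iff', star_eq_conjTranspose, conjTranspose_permMatrix, ← permMatrix_mul,
    mul_inv_cancel, permMatrix_one]

theorem sum_mul_rowMass_permMatrix {σ : Equiv.Perm ι} {A W : Finset ι}
    (hσ : ∀ i, σ i ∈ A ↔ i ∈ W) (h : ι → ℝ) :
    ∑ i, h i * rowMass (σ.permMatrix ℂ) A i = ∑ i ∈ W, h i := by
  simp [rowMass_permMatrix, hσ, sum_ite_mem]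

theorem mem_iff_mem_of_rowMass_eq_ite {U : Matrix ι ι ℂ} (hU : U ∈ unitaryGroup ι ℂ)
    {A W : Finset ι} (hmass : ∀ i, rowMass U A i = if i ∈ W then 1 else 0) {i j : ι}
    (hij : U i j ≠ 0) : i ∈ W ↔ j ∈ A := by
  have hpos : 0 < Complex.normSq (U i j) := Complex.normSq_pos.mpr hij
  have hcompl := rowMass_add_rowMass_compl hU A i
  by_cases hi : i ∈ W <;> by_cases hj : j ∈ A <;>
    simp only [hmass, hi, hj, if_true, if_false] at hcompl ⊢
  · linarith [normSq_le_rowMass U (mem_compl.mpr hj) (i := i)]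
  · have := normSq_le_rowMass U hj (i := i)
    rw [hmass, if_neg hi] at this
    linarith

def basisSpan (R : Type*) [Semiring R] (P : ι → Prop) : Submodule R (ι → R) :=
  Submodule.span R {v | ∃ i, P i ∧ v = Pi.single i 1}

theorem mem_basisSpan_iff {R : Type*} [Semiring R] {P : ι → Prop} {v : ι → R} :
    v ∈ basisSpan R P ↔ ∀ i, v i ≠ 0 → P i := by
  have hset : {v : ι → R | ∃ i, P i ∧ v = Pi.single i 1} = Pi.basisFun R ι '' {i | P i} := by
    ext v
    simp [eq_comm]
  rw [basisSpan, hset, Module.Basis.mem_span_image]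
  simp [Set.subset_def]

theorem map_mulVecLin_basisSpan {U : Matrix ι ι ℂ} (hU : U ∈ unitaryGroup ι ℂ)
    {P Q : ι → Prop} (hblock : ∀ i j, U i j ≠ 0 → (Q i ↔ P j)) :
    (basisSpan ℂ P).map U.mulVecLin = basisSpan ℂ Q := by
  apply le_antisymm
  · rw [basisSpan, Submodule.map_span, Submodule.span_le]
    rintro _ ⟨_, ⟨j, hj, rfl⟩, rfl⟩
    refine mem_basisSpan_iff.mpr fun i hij => ?_
    rw [mulVecLin_apply, mulVec_single_one] at hij
    exact (hblock i j hij).mpr hj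
  · rw [basisSpan, Submodule.span_le]
    rintro _ ⟨i, hi, rfl⟩
    have hback : star U *ᵥ Pi.single i 1 ∈ basisSpan ℂ P := by
      refine mem_basisSpan_iff.mpr fun j hji => ?_
      rw [mulVec_single_one] at hji
      exact (hblock i j (by simpa using hji)).mp hi
    refine ⟨_, hback, ?_⟩
    rw [mulVecLin_apply, mulVec_mulVec, mem_unitaryGroup_iff.mp hU, one_mulVec]

end General

abbrev Word (n : ℕ) := Fin (2 * n + 1) → Fin 2

def weight {n : ℕ} (w : Word n) : ℕ := ∑ i, (w i : ℕ)

def flipAll {n : ℕ} (w : Word n) : Word n := fun i => 1 - w i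

theorem flipAll_involutive (n : ℕ) : Function.Involutive (flipAll (n := n)) := fun w => by
  funext i
  simp only [flipAll]
  omega

theorem weight_add_weight_flipAll {n : ℕ} (w : Word n) :
    weight w + weight (flipAll w) = 2 * n + 1 := by
  have hbit : ∀ x : Fin 2, (x : ℕ) + ((1 - x : Fin 2) : ℕ) = 1 := by decide
  simp [weight, flipAll, ← sum_add_distrib, hbit]

theorem card_word (n : ℕ) : Fintype.card (Word n) = 2 * 2 ^ (2 * n) := by
  simp [pow_succ, mul_comm]

theorem card_lastBit_eq_zero (n : ℕ) :
    #{b : Word n | b (Fin.last (2 * n)) = 0} = 2 ^ (2 * n) := by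
  have hbit : ∀ x : Fin 2, 1 - x = 0 ↔ ¬ x = 0 := by decide
  have := two_mul_card_filter_of_involutive (fun b : Word n => b (Fin.last (2 * n)) = 0)
    (flipAll_involutive n) fun b => hbit (b _)
  rw [card_word] at this
  omega

theorem card_weight_le (n : ℕ) : #{w : Word n | weight w ≤ n} = 2 ^ (2 * n) := by
  have := two_mul_card_filter_of_involutive (fun w : Word n => weight w ≤ n)
    (flipAll_involutive n) fun w => by have := weight_add_weight_flipAll w; omega
  rw [card_word] at this
  omega

theorem re_trace_energy (n : ℕ) (E : ℝ) (M : Matrix (Word n) (Word n) ℂ) :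
    (Matrix.trace (M *
          Matrix.diagonal (fun b : Fin (2 * n + 1) → Fin 2 =>
            if b (Fin.last (2 * n)) = 0 then (((2 : ℝ) ^ (2 * n))⁻¹ : ℂ) else 0) *
          star M *
          Matrix.diagonal (fun b : Fin (2 * n + 1) → Fin 2 =>
            ((E * ∑ i, ((b i : ℕ) : ℝ) : ℝ) : ℂ)))).re =
      ((2 : ℝ) ^ (2 * n))⁻¹ * E *
        ∑ w, (weight w : ℝ) * rowMass M {b | b (Fin.last (2 * n)) = 0} w := by
  have hρ : (fun b : Word n =>
        if b (Fin.last (2 * n)) = 0 then (((2 : ℝ) ^ (2 * n))⁻¹ : ℂ) else 0) =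
      fun b => ((if b (Fin.last (2 * n)) = 0 then ((2 : ℝ) ^ (2 * n))⁻¹ else 0 : ℝ) : ℂ) := by
    funext b
    split_ifs <;> push_cast <;> rfl
  rw [hρ, re_trace_mul_diagonal_mul_star_mul_diagonal, mul_sum]
  refine sum_congr rfl fun w _ => ?_
  simp only [rowMass, weight, ite_mul, zero_mul, sum_ite, sum_const_zero, add_zero, ← mul_sum]
  push_cast
  ring

end MajorityEngine

open MajorityEngine Matrix Finset in
theorem stmt_15 (n : ℕ) (E : ℝ) (hE : 0 < E)
    (U : Matrix (Fin (2 * n + 1) → Fin 2) (Fin (2 * n + 1) → Fin 2) ℂ)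
    (hU : U ∈ Matrix.unitaryGroup (Fin (2 * n + 1) → Fin 2) ℂ)
    (hopt : ∀ V ∈ Matrix.unitaryGroup (Fin (2 * n + 1) → Fin 2) ℂ,
      (Matrix.trace (U *
          Matrix.diagonal (fun b : Fin (2 * n + 1) → Fin 2 =>
            if b (Fin.last (2 * n)) = 0 then (((2 : ℝ) ^ (2 * n))⁻¹ : ℂ) else 0) *
          star U *
          Matrix.diagonal (fun b : Fin (2 * n + 1) → Fin 2 =>
            ((E * ∑ i, ((b i : ℕ) : ℝ) : ℝ) : ℂ)))).re ≤
      (Matrix.trace (V *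
          Matrix.diagonal (fun b : Fin (2 * n + 1) → Fin 2 =>
            if b (Fin.last (2 * n)) = 0 then (((2 : ℝ) ^ (2 * n))⁻¹ : ℂ) else 0) *
          star V *
          Matrix.diagonal (fun b : Fin (2 * n + 1) → Fin 2 =>
            ((E * ∑ i, ((b i : ℕ) : ℝ) : ℝ) : ℂ)))).re) :
    Submodule.map U.mulVecLin
      (Submodule.span ℂ {v : (Fin (2 * n + 1) → Fin 2) → ℂ |
        ∃ b : Fin (2 * n + 1) → Fin 2,
          b (Fin.last (2 * n)) = 0 ∧ v = Pi.single b 1}) =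
    Submodule.span ℂ {v : (Fin (2 * n + 1) → Fin 2) → ℂ |
      ∃ w : Fin (2 * n + 1) → Fin 2,
        (∑ i, (w i : ℕ)) ≤ n ∧ v = Pi.single w 1} := by
  set A : Finset (Word n) := {b | b (Fin.last (2 * n)) = 0}
  set W : Finset (Word n) := {w | weight w ≤ n}
  have hcard : #W = #A := by rw [card_weight_le, card_lastBit_eq_zero]
  obtain ⟨σ, hσ⟩ := Equiv.Perm.exists_map_finset_eq W A hcard
  have hσA : ∀ w, σ w ∈ A ↔ w ∈ W := fun w => by simp [← hσ]
  have hle : ∑ w, (weight w : ℝ) * rowMass U A w ≤ ∑ w ∈ W, (weight w : ℝ) := by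
    have hV := hopt _ (permMatrix_mem_unitaryGroup σ)
    rw [re_trace_energy, re_trace_energy, sum_mul_rowMass_permMatrix hσA] at hV
    exact le_of_mul_le_mul_left hV (by positivity)
  have hmass := bathtub_rigidity W (fun w => (weight w : ℝ)) (rowMass U A) (n + 1 / 2)
    (fun w hw => cast_lt_add_half_of_le (mem_filter.mp hw).2)
    (fun w hw => add_half_lt_cast_of_lt (by simpa [W] using hw))
    (rowMass_nonneg U A) (rowMass_le_one hU A) (by rw [sum_rowMass hU, hcard]) hle
  refine map_mulVecLin_basisSpan hU fun w b hwb => ?_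
  have hblock := mem_iff_mem_of_rowMass_eq_ite hU hmass hwb
  simp only [A, W, mem_filter, mem_univ, true_and] at hblock
  exact hblock
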